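/- Let R > 0 and let A ⊂ ℝ² be a closed disk of radius R. Let X and Y be independent random points, each uniformly distributed on A. Then the Euclidean distance ‖X − Y‖ has probability density f_d(·, R) on [0, 2R], where f_d(h, R) = (2h/R²)[(2/π) arccos(h/(2R)) − (h/(πR))√(1 − h²/(4R²))]. Equivalently, for every bounded measurable k : [0, 2R] → ℝ, (1/(πR²)²) ∫_A ∫_A k(‖x − y‖) dx dy = ∫₀^{2R} f_d(h, R) k(h) dh. -/

import Mathlib

open MeasureTheory

/-- Density of the Euclidean distance between two points independently and uniformly
distributed on a disk of radius `R`. -/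
noncomputable def fd (h R : ℝ) : ℝ :=
  (2 * h / R ^ 2) * ((2 / Real.pi) * Real.arccos (h / (2 * R))
    - (h / (Real.pi * R)) * Real.sqrt (1 - h ^ 2 / (4 * R ^ 2)))

section Aux
open Real Set

noncomputable def gg (R t : ℝ) : ℝ :=
  2 * R^2 * Real.arccos (t / (2*R)) - t * Real.sqrt (R^2 - t^2/4)

local notation "E2" => EuclideanSpace ℝ (Fin 2)

lemma slice_vol (m : ℝ) : volume {y : ℝ | y^2 ≤ m} = ENNReal.ofReal (2 * Real.sqrt m) := by
  rcases le_or_gt 0 m with hm | hm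
  · have : {y : ℝ | y^2 ≤ m} = Icc (-Real.sqrt m) (Real.sqrt m) := by
      ext y
      simp only [mem_setOf_eq, mem_Icc, ← abs_le]
      constructor
      · intro h
        have := Real.sqrt_le_sqrt h
        rwa [Real.sqrt_sq_eq_abs] at this
      · intro h
        calc y^2 = |y|^2 := (sq_abs y).symm
        _ ≤ Real.sqrt m ^ 2 := by
          have := Real.sqrt_nonneg m
          nlinarith [abs_nonneg y]
        _ = m := Real.sq_sqrt hm
    rw [this, Real.volume_Icc]
    congr 1
    ring
  · have h1 : {y : ℝ | y^2 ≤ m} = ∅ := by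
      ext y; simp only [mem_setOf_eq, mem_empty_iff_false, iff_false]
      nlinarith [sq_nonneg y]
    have h2 : Real.sqrt m = 0 := Real.sqrt_eq_zero'.2 hm.le
    simp [h1, h2]

lemma sqrt_integral (R a : ℝ) (hR : 0 < R) (h0 : 0 ≤ a) (haR : a ≤ R) :
    ∫ x in a..R, Real.sqrt (R^2 - x^2) =
      π * R^2 / 4 - (R^2 * Real.arcsin (a/R) + a * Real.sqrt (R^2 - a^2)) / 2 := by
  set F : ℝ → ℝ := fun x => (R^2 * Real.arcsin (x/R) + x * Real.sqrt (R^2 - x^2)) / 2 with hF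
  have hcont : ContinuousOn F (Icc a R) := by
    apply Continuous.continuousOn
    apply Continuous.div_const
    exact ((continuous_const.mul (Real.continuous_arcsin.comp (continuous_id.div_const R))).add
      (continuous_id.mul ((continuous_const.sub (continuous_pow 2)).sqrt)))
  have hderiv : ∀ x ∈ Ioo a R, HasDerivWithinAt F (Real.sqrt (R^2 - x^2)) (Ioi x) x := by
    intro x hx
    have hxlt : -R < x := by linarith [hx.1]
    have hxlt2 : x < R := hx.2
    have hx2 : 0 < R^2 - x^2 := by nlinarith
    set s := Real.sqrt (R^2 - x^2) with hs
    have hspos : 0 < s := Real.sqrt_pos.2 hx2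
    have hs2 : s^2 = R^2 - x^2 := Real.sq_sqrt hx2.le
    have hne1 : x / R ≠ 1 := by
      intro h; rw [div_eq_one_iff_eq hR.ne'] at h; nlinarith
    have hnem1 : x / R ≠ -1 := by
      intro h; rw [div_eq_iff hR.ne'] at h; nlinarith
    have harc : HasDerivAt (fun x : ℝ => Real.arcsin (x/R))
        ((1 / Real.sqrt (1 - (x/R)^2)) * (R⁻¹)) x := by
      have h1 : HasDerivAt (fun x : ℝ => x / R) R⁻¹ x := by
        simpa using (hasDerivAt_id x).div_const R
      exact (Real.hasDerivAt_arcsin hnem1 hne1).comp x h1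
    have hsq : HasDerivAt (fun x : ℝ => Real.sqrt (R^2 - x^2)) (1 / (2*s) * (-(2*x))) x := by
      have h2 : HasDerivAt (fun x : ℝ => R^2 - x^2) (-(2*x)) x := by
        simpa using (hasDerivAt_pow 2 x).const_sub (R^2)
      exact (Real.hasDerivAt_sqrt hx2.ne').comp x h2
    have hsimp : Real.sqrt (1 - (x/R)^2) = s / R := by
      rw [show (1 : ℝ) - (x/R)^2 = (R^2 - x^2) / R^2 by field_simp]
      rw [Real.sqrt_div' _ (by positivity), Real.sqrt_sq hR.le]
    have hFd := (((hasDerivAt_const x (R^2)).mul harc).add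
        ((hasDerivAt_id x).mul hsq)).div_const 2
    simp only [zero_mul, zero_add, id_eq, one_mul] at hFd
    have heq : (R ^ 2 * (1 / Real.sqrt (1 - (x / R) ^ 2) * R⁻¹) +
        (Real.sqrt (R ^ 2 - x ^ 2) + x * (1 / (2 * Real.sqrt (R ^ 2 - x ^ 2)) * -(2 * x)))) / 2
        = s := by
      rw [hsimp, ← hs]
      field_simp
      linear_combination (-1 : ℝ) * hs2
    rw [heq] at hFd
    exact hFd.hasDerivWithinAt
  have hint : IntervalIntegrable (fun x => Real.sqrt (R^2 - x^2)) volume a R :=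
    ((continuous_const.sub (continuous_pow 2)).sqrt).intervalIntegrable a R
  rw [intervalIntegral.integral_eq_sub_of_hasDeriv_right_of_le haR hcont hderiv hint]
  have : F R = π * R^2 / 4 := by
    simp only [hF, div_self hR.ne', Real.arcsin_one, sub_self, Real.sqrt_zero]
    ring
  rw [this, hF]

lemma lens1d (R t : ℝ) (hR : 0 < R) (h0 : 0 ≤ t) (ht : t ≤ 2*R) :
    ∫ x : ℝ, 2 * Real.sqrt (min (R^2 - x^2) (R^2 - (x-t)^2)) = gg R t := by
  set w : ℝ → ℝ := fun x => 2 * Real.sqrt (min (R^2 - x^2) (R^2 - (x-t)^2)) with hw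
  have hsupp : ∀ x, x ∉ Icc (t - R) R → w x = 0 := by
    intro x hx
    simp only [mem_Icc, not_and_or, not_le] at hx
    have : min (R^2 - x^2) (R^2 - (x-t)^2) ≤ 0 := by
      rcases hx with h | h
      · exact le_trans (min_le_right _ _) (by nlinarith)
      · exact le_trans (min_le_left _ _) (by nlinarith)
    simp [hw, Real.sqrt_eq_zero'.2 this]
  have h1 : ∫ x : ℝ, w x = ∫ x in Icc (t - R) R, w x :=
    (setIntegral_eq_integral_of_forall_compl_eq_zero fun x hx => hsupp x hx).symm
  have htR : t - R ≤ R := by linarith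
  have h2 : ∫ x in Icc (t - R) R, w x = ∫ x in (t-R)..R, w x := by
    rw [intervalIntegral.integral_of_le htR, integral_Icc_eq_integral_Ioc]
  have hwc : Continuous w := by
    exact continuous_const.mul (((continuous_const.sub (continuous_pow 2)).min
      (continuous_const.sub ((continuous_id.sub continuous_const).pow 2))).sqrt)
  have h3 : ∫ x in (t-R)..R, w x = (∫ x in (t-R)..(t/2), w x) + ∫ x in (t/2)..R, w x :=
    (intervalIntegral.integral_add_adjacent_intervals
      (hwc.intervalIntegrable _ _) (hwc.intervalIntegrable _ _)).symm
  have h4 : ∫ x in (t-R)..(t/2), w x = ∫ x in (t-R)..(t/2), 2 * Real.sqrt (R^2 - (x-t)^2) := by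
    apply intervalIntegral.integral_congr
    intro x hx
    rw [uIcc_of_le (by linarith)] at hx
    have : (R^2 - (x-t)^2) ≤ R^2 - x^2 := by nlinarith [hx.2]
    simp [hw, min_eq_right this]
  have h5 : ∫ x in (t/2)..R, w x = ∫ x in (t/2)..R, 2 * Real.sqrt (R^2 - x^2) := by
    apply intervalIntegral.integral_congr
    intro x hx
    rw [uIcc_of_le (by linarith)] at hx
    have : (R^2 - x^2) ≤ R^2 - (x-t)^2 := by nlinarith [hx.1]
    simp [hw, min_eq_left this]
  have h6 : ∫ x in (t-R)..(t/2), 2 * Real.sqrt (R^2 - (x-t)^2) =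
      ∫ x in (t/2)..R, 2 * Real.sqrt (R^2 - x^2) := by
    have e1 := intervalIntegral.integral_comp_sub_right (a := t-R) (b := t/2)
      (fun y => 2 * Real.sqrt (R^2 - y^2)) t
    have e2 : ∫ x in (-(R))..(-(t/2)), 2 * Real.sqrt (R^2 - x^2) =
        ∫ x in (t/2)..R, (fun y => 2 * Real.sqrt (R^2 - y^2)) (-x) := by
      rw [intervalIntegral.integral_comp_neg fun y => 2 * Real.sqrt (R^2 - y^2)]
    simp only [neg_sq] at e2
    rw [show (∫ x in (t-R)..(t/2), 2 * Real.sqrt (R^2 - (x-t)^2)) =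
      ∫ x in (t-R)..(t/2), (fun y => 2 * Real.sqrt (R^2 - y^2)) (x - t) from rfl, e1]
    rw [show t - R - t = -(R) by ring, show t/2 - t = -(t/2) by ring, e2]
  have h7 : ∫ x in (t/2)..R, 2 * Real.sqrt (R^2 - x^2) =
      2 * (π * R^2 / 4 - (R^2 * Real.arcsin ((t/2)/R) + (t/2) * Real.sqrt (R^2 - (t/2)^2)) / 2) := by
    rw [intervalIntegral.integral_const_mul, sqrt_integral R (t/2) hR (by linarith) (by linarith)]
  rw [h1, h2, h3, h4, h5, h6, h7]
  have harc : Real.arccos (t/(2*R)) = π/2 - Real.arcsin (t/(2*R)) := Real.arccos_eq_pi_div_two_sub_arcsin _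
  have e3 : (t/2)/R = t/(2*R) := by ring
  have e4 : R^2 - (t/2)^2 = R^2 - t^2/4 := by ring
  rw [e3, e4] at *
  rw [gg, harc]
  ring

lemma gg_zero (R t : ℝ) (hR : 0 < R) (ht : 2*R ≤ t) : gg R t = 0 := by
  have h1 : Real.arccos (t/(2*R)) = 0 := by
    rw [Real.arccos_eq_zero]
    rw [le_div_iff₀ (by linarith)]
    linarith
  have h2 : Real.sqrt (R^2 - t^2/4) = 0 := Real.sqrt_eq_zero'.2 (by nlinarith)
  simp [gg, h1, h2]


lemma gg_nonneg (R t : ℝ) (hR : 0 < R) (h0 : 0 ≤ t) : 0 ≤ gg R t := by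
  rcases le_or_gt (2*R) t with ht | ht
  · simp [gg_zero R t hR ht]
  · have hs : t / (2*R) ∈ Icc (-1:ℝ) 1 := by
      constructor
      · have : (0:ℝ) ≤ t/(2*R) := by positivity
        linarith
      · rw [div_le_one (by linarith)]; linarith
    set θ := Real.arccos (t/(2*R)) with hθ
    have hθ0 : 0 ≤ θ := Real.arccos_nonneg _
    have hcos : Real.cos θ = t/(2*R)  := Real.cos_arccos hs.1 hs.2
    have hsin : Real.sin θ = Real.sqrt (1 - (t/(2*R))^2) := Real.sin_arccos _
    have hsin0 : 0 ≤ Real.sin θ := Real.sin_nonneg_of_nonneg_of_le_pi hθ0 (Real.arccos_le_pi _)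
    have key : Real.sin θ * Real.cos θ ≤ θ :=
      le_trans (by nlinarith [Real.cos_le_one θ, Real.sin_le hθ0]) (le_refl θ) |>.trans (le_refl θ)
    -- relate sqrt(R^2 - t^2/4) to sqrt(1 - (t/2R)^2)
    have hr : Real.sqrt (R^2 - t^2/4) = R * Real.sqrt (1 - (t/(2*R))^2) := by
      rw [show R^2 - t^2/4 = R^2 * (1 - (t/(2*R))^2) by field_simp; ring]
      rw [Real.sqrt_mul (by positivity), Real.sqrt_sq hR.le]
    rw [gg, hr]
    have : t * (R * Real.sqrt (1 - (t/(2*R))^2)) = 2*R^2 * (Real.sin θ * Real.cos θ) := by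
      rw [hsin, hcos]; field_simp
    rw [this]
    nlinarith [key]


lemma lensRR (R t : ℝ) (hR : 0 < R) (h0 : 0 ≤ t) :
    volume {p : ℝ × ℝ | p.1^2 + p.2^2 ≤ R^2 ∧ (p.1 - t)^2 + p.2^2 ≤ R^2} =
      ENNReal.ofReal (gg R t) := by
  rcases le_or_gt t (2*R) with ht | ht
  · set S := {p : ℝ × ℝ | p.1^2 + p.2^2 ≤ R^2 ∧ (p.1 - t)^2 + p.2^2 ≤ R^2} with hS
    have hSm : MeasurableSet S := by
      have : S = {p : ℝ × ℝ | p.1^2 + p.2^2 ≤ R^2} ∩ {p : ℝ × ℝ | (p.1 - t)^2 + p.2^2 ≤ R^2} := rfl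
      rw [this]
      exact (measurableSet_le (by fun_prop) measurable_const).inter
        (measurableSet_le (by fun_prop) measurable_const)
    rw [Measure.volume_eq_prod, Measure.prod_apply hSm]
    have hslice : ∀ x : ℝ, (Prod.mk x ⁻¹' S) =
        {y : ℝ | y^2 ≤ min (R^2 - x^2) (R^2 - (x-t)^2)} := by
      intro x
      ext y
      simp only [hS, mem_preimage, mem_setOf_eq, le_min_iff]
      constructor <;> intro h <;> exact ⟨by linarith [h.1], by linarith [h.2]⟩
    have hcalc : ∀ x : ℝ, volume (Prod.mk x ⁻¹' S) =
        ENNReal.ofReal (2 * Real.sqrt (min (R^2 - x^2) (R^2 - (x-t)^2))) := by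
      intro x; rw [hslice x, slice_vol]
    simp_rw [hcalc]
    set w : ℝ → ℝ := fun x => 2 * Real.sqrt (min (R^2 - x^2) (R^2 - (x-t)^2)) with hw
    have hwc : Continuous w :=
      continuous_const.mul (((continuous_const.sub (continuous_pow 2)).min
        (continuous_const.sub ((continuous_id.sub continuous_const).pow 2))).sqrt)
    have hwsupp : HasCompactSupport w := by
      apply HasCompactSupport.intro (isCompact_Icc (a := t - R) (b := R))
      intro x hx
      simp only [mem_Icc, not_and_or, not_le] at hx
      have : min (R^2 - x^2) (R^2 - (x-t)^2) ≤ 0 := by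
        rcases hx with h | h
        · exact le_trans (min_le_right _ _) (by nlinarith)
        · exact le_trans (min_le_left _ _) (by nlinarith)
      simp [hw, Real.sqrt_eq_zero'.2 this]
    have hint : Integrable w := hwc.integrable_of_hasCompactSupport hwsupp
    have hnn : 0 ≤ᵐ[volume] w := Filter.Eventually.of_forall fun x => by positivity
    rw [← ofReal_integral_eq_lintegral_ofReal hint hnn, lens1d R t hR h0 ht]
  · have hempty : {p : ℝ × ℝ | p.1^2 + p.2^2 ≤ R^2 ∧ (p.1 - t)^2 + p.2^2 ≤ R^2} = ∅ := by
      ext p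
      simp only [mem_setOf_eq, mem_empty_iff_false, iff_false, not_and]
      intro h1 h2
      nlinarith [sq_nonneg p.2, sq_nonneg (2*p.1 - t), sq_nonneg p.1, sq_nonneg (p.1 - t)]
    rw [hempty, gg_zero R t hR ht.le]
    simp

lemma lensE2 (R : ℝ) (hR : 0 < R) (z : E2) :
    volume (Metric.closedBall (0 : E2) R ∩ Metric.closedBall z R) =
      ENNReal.ofReal (gg R ‖z‖) := by
  set t := ‖z‖ with htdef
  have ht0 : 0 ≤ t := norm_nonneg z
  set v : E2 := t • (EuclideanSpace.single (0 : Fin 2) (1:ℝ)) with hv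
  have hnv : ‖v‖ = t := by
    rw [hv, norm_smul, EuclideanSpace.norm_single]
    simp [abs_of_nonneg ht0]
  -- reflection sending z to v
  have hzv : ‖z‖ = ‖v‖ := by rw [hnv]
  set f := Submodule.reflection (ℝ ∙ (z - v))ᗮ with hf
  have hfz : f z = v := Submodule.reflection_sub hzv
  have hfmp : MeasurePreserving f volume volume :=
    (Submodule.reflection (ℝ ∙ (z - v))ᗮ).measurePreserving
  have hpre : f ⁻¹' (Metric.closedBall (0 : E2) R ∩ Metric.closedBall v R) =
      Metric.closedBall (0 : E2) R ∩ Metric.closedBall z R := by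
    have h1 : f ⁻¹' Metric.closedBall (0 : E2) R = Metric.closedBall (0 : E2) R := by
      ext x
      simp only [mem_preimage, Metric.mem_closedBall, dist_zero_right]
      rw [f.norm_map]
    have h2 : f ⁻¹' Metric.closedBall v R = Metric.closedBall z R := by
      ext x
      simp only [mem_preimage, Metric.mem_closedBall, dist_eq_norm]
      rw [← hfz, ← map_sub, f.norm_map]
    rw [preimage_inter, h1, h2]
  have hvol1 : volume (Metric.closedBall (0 : E2) R ∩ Metric.closedBall z R) =
      volume (Metric.closedBall (0 : E2) R ∩ Metric.closedBall v R) := by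
    rw [← hpre]
    exact hfmp.measure_preimage
      ((measurableSet_closedBall.inter measurableSet_closedBall).nullMeasurableSet)
  rw [hvol1]
  -- transfer to ℝ × ℝ
  set φ : E2 ≃ᵐ (ℝ × ℝ) :=
    (MeasurableEquiv.toLp 2 (Fin 2 → ℝ)).symm.trans (MeasurableEquiv.finTwoArrow) with hφ
  have hφmp : MeasurePreserving φ volume volume :=
    (volume_preserving_finTwoArrow ℝ).comp (EuclideanSpace.volume_preserving_symm_measurableEquiv_toLp (Fin 2))
  set S := {p : ℝ × ℝ | p.1^2 + p.2^2 ≤ R^2 ∧ (p.1 - t)^2 + p.2^2 ≤ R^2} with hS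
  have hSm : MeasurableSet S := by
    have : S = {p : ℝ × ℝ | p.1^2 + p.2^2 ≤ R^2} ∩ {p : ℝ × ℝ | (p.1 - t)^2 + p.2^2 ≤ R^2} := rfl
    rw [this]
    exact (measurableSet_le (by fun_prop) measurable_const).inter
      (measurableSet_le (by fun_prop) measurable_const)
  have hset : Metric.closedBall (0 : E2) R ∩ Metric.closedBall v R = φ ⁻¹' S := by
    ext x
    have hφx : φ x = (x 0, x 1) := rfl
    have hnx : ‖x‖ = Real.sqrt ((x 0)^2 + (x 1)^2) := by
      rw [EuclideanSpace.norm_eq]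
      congr 1
      simp [Fin.sum_univ_two, Real.norm_eq_abs, sq_abs]
    have hnxv : ‖x - v‖ = Real.sqrt ((x 0 - t)^2 + (x 1)^2) := by
      rw [EuclideanSpace.norm_eq]
      congr 1
      have hv0 : v 0 = t := by simp [hv, EuclideanSpace.single_apply]
      have hv1 : v 1 = (0:ℝ) := by simp [hv, EuclideanSpace.single_apply]
      simp [Fin.sum_univ_two, Real.norm_eq_abs, sq_abs, hv0, hv1]
    simp only [mem_inter_iff, Metric.mem_closedBall, dist_eq_norm, sub_zero,
      mem_preimage, hφx, hS, mem_setOf_eq]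
    rw [hnx, hnxv]
    have sqle : ∀ m : ℝ, 0 ≤ m → (Real.sqrt m ≤ R ↔ m ≤ R^2) := by
      intro m hm
      rw [show R = Real.sqrt (R^2) by rw [Real.sqrt_sq hR.le]]
      rw [Real.sqrt_le_sqrt_iff (by positivity)]
      rw [Real.sqrt_sq hR.le]
    rw [sqle _ (by positivity), sqle _ (by positivity)]
  rw [hset, hφmp.measure_preimage hSm.nullMeasurableSet, lensRR R t hR ht0]

lemma lens_c (R : ℝ) (hR : 0 < R) (c z : E2) :
    volume (Metric.closedBall c R ∩ Metric.closedBall (c + z) R) =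
      ENNReal.ofReal (gg R ‖z‖) := by
  have hpre : (fun x : E2 => c + x) ⁻¹' (Metric.closedBall c R ∩ Metric.closedBall (c + z) R) =
      Metric.closedBall (0 : E2) R ∩ Metric.closedBall z R := by
    ext x
    simp only [mem_preimage, mem_inter_iff, Metric.mem_closedBall, dist_eq_norm]
    constructor <;> intro h <;> constructor
    · simpa using h.1
    · have := h.2; rw [show c + x - (c + z) = x - z by abel] at this; exact this
    · simpa using h.1
    · rw [show c + x - (c + z) = x - z by abel]; simpa using h.2
  rw [← lensE2 R hR z, ← hpre]
  exact (measure_preimage_add volume c _).symm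


lemma volE2ball (R : ℝ) (hR : 0 < R) (c : E2) :
    volume (Metric.closedBall c R) = ENNReal.ofReal (π * R^2) := by
  rw [EuclideanSpace.volume_closedBall]
  simp only [Fintype.card_fin]
  rw [show ((2:ℕ):ℝ)/2 + 1 = 2 by norm_num]
  rw [Real.Gamma_two]
  rw [← ENNReal.ofReal_pow hR.le]
  rw [← ENNReal.ofReal_mul (by positivity)]
  congr 1
  rw [Real.sq_sqrt Real.pi_nonneg]
  ring

lemma key (R : ℝ) (hR : 0 < R) (c : E2) (k : ℝ → ℝ) (hk : Measurable k)
    (M : ℝ) (hM : ∀ h, |k h| ≤ M) :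
    ∫ x in Metric.closedBall c R, ∫ y in Metric.closedBall c R, k ‖x - y‖ =
      2 * π * ∫ h in Icc (0:ℝ) (2*R), h * (gg R h * k h) := by
  have hM0 : 0 ≤ M := le_trans (abs_nonneg (k 0)) (hM 0)
  set A := Metric.closedBall c R with hAdef
  have hA : MeasurableSet A := measurableSet_closedBall
  set I : E2 → ℝ := A.indicator (fun _ => (1:ℝ)) with hIdef
  have hI : Measurable I := measurable_const.indicator hA
  have hI01 : ∀ x, 0 ≤ I x ∧ I x ≤ 1 := by
    intro x
    by_cases hx : x ∈ A <;> simp [hIdef, hx]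
  have hind : ∀ (f : E2 → ℝ) (x : E2), A.indicator f x = I x * f x := by
    intro f x
    by_cases hx : x ∈ A <;> simp [hIdef, hx]
  -- step 1
  have step1 : ∀ x : E2, ∫ y in A, k ‖x - y‖ = ∫ z : E2, I (x - z) * k ‖z‖ := by
    intro x
    rw [← integral_indicator hA]
    rw [integral_congr_ae (ae_of_all _ (fun y => hind (fun y => k ‖x - y‖) y))]
    have := integral_sub_left_eq_self (fun y : E2 => I y * k ‖x - y‖) volume x
    rw [← this]
    congr 1
    ext z
    rw [sub_sub_cancel]
  -- step 2
  have step2 : ∫ x in A, ∫ y in A, k ‖x - y‖ =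
      ∫ x : E2, ∫ z : E2, I x * (I (x - z) * k ‖z‖) := by
    rw [← integral_indicator hA]
    rw [integral_congr_ae (ae_of_all _ (fun x => hind (fun x => ∫ y in A, k ‖x - y‖) x))]
    congr 1
    ext x
    rw [step1 x, ← integral_const_mul]
  rw [step2]
  -- Fubini
  set B := Metric.closedBall (0 : E2) (2*R) with hBdef
  have hB : MeasurableSet B := measurableSet_closedBall
  have hz2R : ∀ x z : E2, x ∈ A → x - z ∈ A → ‖z‖ ≤ 2*R := by
    intro x z hx hxz
    rw [hAdef, Metric.mem_closedBall, dist_eq_norm] at hx hxz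
    have : z = (x - c) - (x - z - c) := by abel
    rw [this]
    calc ‖(x - c) - (x - z - c)‖ ≤ ‖x - c‖ + ‖x - z - c‖ := norm_sub_le _ _
    _ ≤ 2*R := by linarith
  have hHmeas : Measurable (fun p : E2 × E2 => I p.1 * (I (p.1 - p.2) * k ‖p.2‖)) := by
    exact (hI.comp measurable_fst).mul ((hI.comp (measurable_fst.sub measurable_snd)).mul
      (hk.comp measurable_snd.norm))
  have hbound : ∀ p : E2 × E2, ‖I p.1 * (I (p.1 - p.2) * k ‖p.2‖)‖ ≤
      (A ×ˢ B).indicator (fun _ => M) p := by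
    intro p
    by_cases hp : p ∈ A ×ˢ B
    · rw [indicator_of_mem hp]
      have h1 := hI01 p.1
      have h2 := hI01 (p.1 - p.2)
      have h3 := hM ‖p.2‖
      rw [norm_mul, norm_mul, Real.norm_eq_abs, Real.norm_eq_abs, Real.norm_eq_abs,
        abs_of_nonneg h1.1, abs_of_nonneg h2.1]
      have hb1 : I (p.1 - p.2) * |k ‖p.2‖| ≤ 1 * M :=
        mul_le_mul h2.2 h3 (abs_nonneg _) zero_le_one
      have hb2 : I p.1 * (I (p.1 - p.2) * |k ‖p.2‖|) ≤ 1 * (1 * M) :=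
        mul_le_mul h1.2 hb1 (mul_nonneg h2.1 (abs_nonneg _)) zero_le_one
      linarith
    · rw [indicator_of_notMem hp]
      rw [mem_prod, not_and_or] at hp
      rcases hp with hp | hp
      · have hI0 : I p.1 = 0 := by simp [hIdef, hp]
        simp [hI0]
      · have : I p.1 * I (p.1 - p.2) = 0 := by
          by_cases h1 : p.1 ∈ A
          · by_cases h2 : p.1 - p.2 ∈ A
            · exfalso
              apply hp
              rw [hBdef, Metric.mem_closedBall, dist_zero_right]
              exact hz2R _ _ h1 h2
            · simp [hIdef, indicator_of_notMem h2]
          · simp [hIdef, indicator_of_notMem h1]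
        rw [show I p.1 * (I (p.1 - p.2) * k ‖p.2‖) = (I p.1 * I (p.1 - p.2)) * k ‖p.2‖ by ring,
          this, zero_mul, norm_zero]
  have hintb : Integrable ((A ×ˢ B).indicator (fun _ => M)) (volume.prod volume) := by
    rw [integrable_indicator_iff (hA.prod hB)]
    apply integrableOn_const
    rw [Measure.prod_prod]
    exact (ENNReal.mul_lt_top measure_closedBall_lt_top measure_closedBall_lt_top).ne
    exact enorm_ne_top
  have hHint : Integrable (Function.uncurry fun x z : E2 => I x * (I (x - z) * k ‖z‖))
      (volume.prod volume) := by
    apply hintb.mono' hHmeas.aestronglyMeasurable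
    exact ae_of_all _ hbound
  rw [integral_integral_swap hHint]
  -- inner integral is the covariogram
  have hinner : ∀ z : E2, ∫ x : E2, I x * (I (x - z) * k ‖z‖) = gg R ‖z‖ * k ‖z‖ := by
    intro z
    have h1 : ∀ x : E2, I x * (I (x - z) * k ‖z‖) = (I x * I (x - z)) * k ‖z‖ := fun x => by ring
    rw [integral_congr_ae (ae_of_all _ h1), integral_mul_const]
    congr 1
    have h2 : ∀ x : E2, I x * I (x - z) =
        (A ∩ Metric.closedBall (c + z) R).indicator (fun _ => (1:ℝ)) x := by
      intro x
      have hmem : x - z ∈ A ↔ x ∈ Metric.closedBall (c + z) R := by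
        rw [hAdef, Metric.mem_closedBall, Metric.mem_closedBall, dist_eq_norm, dist_eq_norm]
        rw [show x - z - c = x - (c + z) by abel]
      by_cases h1' : x ∈ A <;> by_cases h2' : x - z ∈ A
      · rw [indicator_of_mem (mem_inter h1' (hmem.1 h2'))]
        simp [hIdef, h1', h2']
      · rw [indicator_of_notMem (fun hc => h2' (hmem.2 hc.2))]
        simp [hIdef, indicator_of_notMem h2']
      · rw [indicator_of_notMem (fun hc => h1' hc.1)]
        simp [hIdef, indicator_of_notMem h1']
      · rw [indicator_of_notMem (fun hc => h1' hc.1)]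
        simp [hIdef, indicator_of_notMem h1']
    rw [integral_congr_ae (ae_of_all _ h2),
      integral_indicator_const (1:ℝ) (hA.inter measurableSet_closedBall)]
    rw [measureReal_def, lens_c R hR c z, smul_eq_mul, mul_one,
      ENNReal.toReal_ofReal (gg_nonneg R ‖z‖ hR (norm_nonneg z))]
  rw [integral_congr_ae (ae_of_all _ hinner)]
  -- radial integration
  have hrad := integral_fun_norm_addHaar (volume : Measure E2) (fun r => gg R r * k r)
  rw [hrad]
  have hdim : Module.finrank ℝ E2 = 2 := finrank_euclideanSpace_fin
  rw [hdim]
  have hball : (volume (Metric.ball (0 : E2) 1)).toReal = π := by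
    rw [EuclideanSpace.volume_ball]
    simp only [Fintype.card_fin]
    rw [show ((2:ℕ):ℝ)/2 + 1 = 2 by norm_num, Real.Gamma_two]
    rw [ENNReal.toReal_mul, ENNReal.toReal_pow, ENNReal.toReal_ofReal (by norm_num : (0:ℝ) ≤ 1),
      ENNReal.toReal_ofReal (by positivity)]
    rw [Real.sq_sqrt Real.pi_nonneg]
    ring
  rw [measureReal_def, hball]
  -- to Icc
  have hfun : ∀ y ∈ Ioi (0:ℝ), y ^ (2-1) • (gg R y * k y) =
      (Ioc (0:ℝ) (2*R)).indicator (fun y => y * (gg R y * k y)) y := by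
    intro y hy
    have h21 : (2 - 1 : ℕ) = 1 := rfl
    rw [h21, pow_one, smul_eq_mul]
    rcases le_or_gt y (2*R) with h2 | h2
    · rw [indicator_of_mem (mem_Ioc.2 ⟨hy, h2⟩)]
    · rw [indicator_of_notMem (fun hc => absurd (mem_Ioc.1 hc).2 (not_le.2 h2))]
      rw [gg_zero R y hR h2.le]
      ring
  have hIoi : ∫ y in Ioi (0:ℝ), y ^ (2-1) • (gg R y * k y) =
      ∫ h in Icc (0:ℝ) (2*R), h * (gg R h * k h) := by
    rw [setIntegral_congr_fun measurableSet_Ioi hfun,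
      setIntegral_indicator measurableSet_Ioc,
      Set.inter_eq_self_of_subset_right Ioc_subset_Ioi_self]
    exact integral_Icc_eq_integral_Ioc.symm
  rw [hIoi]
  rw [nsmul_eq_mul, smul_eq_mul]
  ring

lemma alg (R h : ℝ) (hR : 0 < R) : 2 * π * (h * gg R h) = (π * R^2)^2 * fd h R := by
  have hs : Real.sqrt (R^2 - h^2/4) = R * Real.sqrt (1 - h^2/(4*R^2)) := by
    rw [show R^2 - h^2/4 = R^2 * (1 - h^2/(4*R^2)) by field_simp]
    rw [Real.sqrt_mul (by positivity), Real.sqrt_sq hR.le]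
  rw [fd, gg, hs]
  have hπ : (π:ℝ) ≠ 0 := Real.pi_ne_zero
  field_simp


lemma fd_nonneg (R h : ℝ) (hR : 0 < R) (h0 : 0 ≤ h) : 0 ≤ fd h R := by
  have h1 : 0 ≤ 2 * π * (h * gg R h) := by
    have := gg_nonneg R h hR h0
    positivity
  rw [alg R h hR] at h1
  have h2 : (0:ℝ) < (π * R^2)^2 := by positivity
  nlinarith


lemma keyfd (R : ℝ) (hR : 0 < R) (c : E2) (k : ℝ → ℝ) (hk : Measurable k)
    (M : ℝ) (hM : ∀ h, |k h| ≤ M) :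
    (1 / (Real.pi * R ^ 2) ^ 2) * ∫ x in Metric.closedBall c R,
        ∫ y in Metric.closedBall c R, k ‖x - y‖ =
      ∫ h in Set.Icc (0 : ℝ) (2 * R), fd h R * k h := by
  rw [key R hR c k hk M hM]
  have hfd : ∀ h ∈ Icc (0:ℝ) (2*R), fd h R * k h =
      (1 / (π * R^2)^2 * (2 * π)) * (h * (gg R h * k h)) := by
    intro h _
    have halg := alg R h hR
    have hne : ((π : ℝ) * R^2)^2 ≠ 0 := by positivity
    have : fd h R = 2 * π * (h * gg R h) / (π * R^2)^2 := by
      rw [eq_div_iff hne]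
      linarith [halg]
    rw [this]
    field_simp
  rw [setIntegral_congr_fun measurableSet_Icc hfd, integral_const_mul]
  ring

end Aux

/-- If `X` and `Y` are independent random points uniformly distributed on a closed disk
`A ⊂ ℝ²` of radius `R`, then `‖X - Y‖` has density `f_d(·,R)` on `[0, 2R]`; equivalently,
for every bounded measurable `k`,
`(1/(πR²)²) ∫_A ∫_A k(‖x-y‖) dx dy = ∫₀^{2R} f_d(h,R) k(h) dh`. -/
theorem stmt14 (R : ℝ) (hR : 0 < R) (c : EuclideanSpace ℝ (Fin 2))
    {Ω : Type*} [MeasurableSpace Ω] (P : Measure Ω) [IsProbabilityMeasure P]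
    (X Y : Ω → EuclideanSpace ℝ (Fin 2)) (hX : Measurable X) (hY : Measurable Y)
    (hindep : ProbabilityTheory.IndepFun X Y P)
    (hXunif : P.map X =
      (volume (Metric.closedBall c R))⁻¹ • volume.restrict (Metric.closedBall c R))
    (hYunif : P.map Y =
      (volume (Metric.closedBall c R))⁻¹ • volume.restrict (Metric.closedBall c R)) :
    (P.map (fun ω => ‖X ω - Y ω‖) =
      (volume.restrict (Set.Icc (0 : ℝ) (2 * R))).withDensity
        (fun h => ENNReal.ofReal (fd h R))) ∧
    ∀ k : ℝ → ℝ, Measurable k → (∃ M : ℝ, ∀ h, |k h| ≤ M) →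
      (1 / (Real.pi * R ^ 2) ^ 2) * ∫ x in Metric.closedBall c R,
          ∫ y in Metric.closedBall c R, k ‖x - y‖ =
        ∫ h in Set.Icc (0 : ℝ) (2 * R), fd h R * k h := by
  have hπ : (0:ℝ) < Real.pi := Real.pi_pos
  set A := Metric.closedBall c R with hAdef
  have hA : MeasurableSet A := measurableSet_closedBall
  set κ : ENNReal := volume A with hκdef
  have hκ : κ = ENNReal.ofReal (Real.pi * R^2) := volE2ball R hR c
  have hκ0 : κ ≠ 0 := by
    rw [hκ]; simp only [ne_eq, ENNReal.ofReal_eq_zero, not_le]; positivity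
  have hκt : κ ≠ ⊤ := by rw [hκ]; exact ENNReal.ofReal_ne_top
  set μA : Measure (EuclideanSpace ℝ (Fin 2)) := κ⁻¹ • volume.restrict A with hμA
  have : IsProbabilityMeasure μA := by
    constructor
    rw [hμA, Measure.smul_apply, Measure.restrict_apply_univ, smul_eq_mul]
    exact ENNReal.inv_mul_cancel hκ0 hκt
  set n : EuclideanSpace ℝ (Fin 2) × EuclideanSpace ℝ (Fin 2) → ℝ :=
    fun p => ‖p.1 - p.2‖ with hn
  have hnm : Measurable n := (measurable_fst.sub measurable_snd).norm
  have hprod : P.map (fun ω => (X ω, Y ω)) = μA.prod μA := by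
    rw [(ProbabilityTheory.indepFun_iff_map_prod_eq_prod_map_map hX.aemeasurable
      hY.aemeasurable).mp hindep, hXunif, hYunif]
  have hmap : P.map (fun ω => ‖X ω - Y ω‖) = (μA.prod μA).map n := by
    rw [← hprod, Measure.map_map hnm (hX.prodMk hY)]
    rfl
  -- a general evaluation of integrals against μA.prod μA
  have heval : ∀ k : ℝ → ℝ, Measurable k → ∀ M : ℝ, (∀ h, |k h| ≤ M) →
      ∫ p, k (n p) ∂(μA.prod μA) = ∫ h in Set.Icc (0 : ℝ) (2 * R), fd h R * k h := by
    intro k hk M hM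
    have hint : Integrable (fun p => k (n p)) (μA.prod μA) := by
      apply (integrable_const M).mono' ((hk.comp hnm).aestronglyMeasurable)
      exact ae_of_all _ fun p => by simpa using hM (n p)
    rw [integral_prod _ hint]
    have hinner : ∀ x, ∫ y, k (n (x, y)) ∂μA = (κ⁻¹).toReal • ∫ y in A, k ‖x - y‖ := by
      intro x
      rw [hμA, integral_smul_measure]
    simp_rw [hinner]
    rw [hμA, integral_smul_measure, integral_smul]
    have hkt : (κ⁻¹).toReal = (Real.pi * R^2)⁻¹ := by
      rw [hκ, ← ENNReal.ofReal_inv_of_pos (by positivity)]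
      exact ENNReal.toReal_ofReal (by positivity)
    rw [hkt, smul_eq_mul, smul_eq_mul, ← mul_assoc]
    rw [show (Real.pi * R^2)⁻¹ * (Real.pi * R^2)⁻¹ = 1 / (Real.pi * R^2)^2 by
      rw [← mul_inv, one_div]; ring_nf]
    exact keyfd R hR c k hk M hM
  constructor
  · -- measure equality
    ext S hS
    rw [hmap, Measure.map_apply hnm hS]
    set kS : ℝ → ℝ := S.indicator (fun _ => (1:ℝ)) with hkS
    have hkSm : Measurable kS := measurable_const.indicator hS
    have hkSb : ∀ h, |kS h| ≤ 1 := by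
      intro h
      by_cases hh : h ∈ S <;> simp [hkS, hh]
    have e1 : ((μA.prod μA) (n ⁻¹' S)).toReal = ∫ p, kS (n p) ∂(μA.prod μA) := by
      have hfe : (fun p => kS (n p)) = (n ⁻¹' S).indicator (fun _ => (1:ℝ)) := by
        funext p
        by_cases hp : n p ∈ S <;> simp [hkS, Set.indicator_apply, hp]
      rw [hfe, integral_indicator_const (1:ℝ) (hnm hS), smul_eq_mul, mul_one, measureReal_def]
    have e2 := heval kS hkSm 1 hkSb
    have e3 : ∫ h in Set.Icc (0 : ℝ) (2 * R), fd h R * kS h =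
        ∫ h in Set.Icc (0 : ℝ) (2 * R) ∩ S, fd h R := by
      rw [show (fun h => fd h R * kS h) = Set.indicator S (fun h => fd h R) from ?_]
      · exact setIntegral_indicator hS
      · funext h
        by_cases hh : h ∈ S <;> simp [hkS, hh]
    have hfin : (μA.prod μA) (n ⁻¹' S) ≠ ⊤ := measure_ne_top _ _
    rw [← ENNReal.ofReal_toReal hfin, e1, e2, e3]
    -- now the RHS withDensity
    rw [withDensity_apply _ hS, Measure.restrict_restrict hS]
    have hcont : Continuous (fun h => fd h R) := by
      apply Continuous.mul
      · fun_prop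
      · apply Continuous.sub
        · exact continuous_const.mul (Real.continuous_arccos.comp (by fun_prop))
        · exact (by fun_prop : Continuous fun h : ℝ => h / (Real.pi * R)).mul
            ((continuous_const.sub (by fun_prop)).sqrt)
    have hInt : IntegrableOn (fun h => fd h R) (S ∩ Set.Icc (0:ℝ) (2*R)) volume :=
      (hcont.integrableOn_Icc).mono_set Set.inter_subset_right
    have hnn : 0 ≤ᵐ[volume.restrict (S ∩ Set.Icc (0:ℝ) (2*R))] (fun h => fd h R) := by
      rw [Filter.EventuallyLE, ae_restrict_iff' (hS.inter measurableSet_Icc)]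
      exact ae_of_all _ fun h hh => fd_nonneg R h hR hh.2.1
    rw [← ofReal_integral_eq_lintegral_ofReal hInt hnn, Set.inter_comm]
  · -- integral identity
    rintro k hk ⟨M, hM⟩
    exact keyfd R hR c k hk M hM
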